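/- arXiv:1802.05699 — 8 statements merged into one kernel-verified Lean document; each statement's English description precedes it below -/
import Mathlib

section
/- Let X be a real Hilbert space, x* ∈ X, δ > 0, and g : X → X a map with g(x*) = 0 that is locally strongly monotone with constant γ > 0 and locally Lipschitz continuous with constant L > 0 on the open ball B_δ(x*). Then there exists ε > 0 such that for every y ∈ X with ‖y‖ ≤ ε, the equation g(x) = y has a unique solution x ∈ B_δ(x*); moreover, if g(x₁) = y₁ and g(x₂) = y₂ with x₁, x₂ ∈ B_δ(x*), then ‖x₁ − x₂‖ ≤ γ⁻¹‖y₁ − y₂‖, i.e., the local solution map y ↦ x is Lipschitz continuous with constant 1/γ. -/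
open RealInnerProductSpace Metric Set Function
open scoped NNReal

/-!
For small `t > 0` the map `x ↦ x - t • (g x - y)` is a contraction on `B_δ(x*)`: expanding the
square, strong monotonicity and the Lipschitz bound give the factor `√(1 - 2tγ + t²L²)`, which
for `t = γ / L²` equals `√(1 - (γ/L)²) < 1`. Since `g x* = 0`, this map moves `x*` by only
`t ‖y‖`, so for small `y` it maps a closed ball around `x*` into itself, and Banach's fixed
point theorem yields a solution of `g x = y`. Pairing strong monotonicity with Cauchy–Schwarz
gives `γ ‖x₁ - x₂‖ ≤ ‖g x₁ - g x₂‖`, hence uniqueness and the Lipschitz bound of the inverse.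
-/

theorem exists_isFixedPt_mem_closedBall {α : Type*} [MetricSpace α] [CompleteSpace α]
    {f : α → α} {K : ℝ≥0} {x₀ : α} {r : ℝ} (hK : K < 1)
    (hf : LipschitzOnWith K f (closedBall x₀ r)) (hx₀ : dist (f x₀) x₀ ≤ (1 - K) * r) :
    ∃ x ∈ closedBall x₀ r, IsFixedPt f x := by
  have hK' : (K : ℝ) < 1 := hK
  have hr : 0 ≤ r := nonneg_of_mul_nonneg_right (dist_nonneg.trans hx₀) (by linarith)
  have hmaps : MapsTo f (closedBall x₀ r) (closedBall x₀ r) := fun x hx => by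
    rw [mem_closedBall] at hx ⊢
    calc dist (f x) x₀ ≤ dist (f x) (f x₀) + dist (f x₀) x₀ := dist_triangle _ _ _
      _ ≤ K * dist x x₀ + (1 - K) * r :=
          add_le_add (hf.dist_le_mul x hx x₀ (mem_closedBall_self hr)) hx₀
      _ ≤ K * r + (1 - K) * r := by gcongr
      _ = r := by ring
  obtain ⟨x, hx, hfix, -⟩ := ContractingWith.exists_fixedPoint' isClosed_closedBall.isComplete
    hmaps ⟨hK, hmaps.lipschitzOnWith_iff_restrict.mp hf⟩ (mem_closedBall_self hr)
    (edist_ne_top _ _)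
  exact ⟨x, hx, hfix⟩

section InnerProductSpace

variable {E : Type*} [NormedAddCommGroup E] [InnerProductSpace ℝ E]

theorem norm_le_inv_mul_norm_of_mul_sq_le_inner {u v : E} {γ : ℝ} (hγ : 0 < γ)
    (h : γ * ‖u‖ ^ 2 ≤ ⟪v, u⟫) : ‖u‖ ≤ γ⁻¹ * ‖v‖ := by
  rw [le_inv_mul_iff₀ hγ]
  rcases (norm_nonneg u).eq_or_lt with hu | hu
  · rw [← hu, mul_zero]
    exact norm_nonneg v
  · refine le_of_mul_le_mul_right ?_ hu
    calc γ * ‖u‖ * ‖u‖ = γ * ‖u‖ ^ 2 := by ring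
      _ ≤ ⟪v, u⟫ := h
      _ ≤ ‖v‖ * ‖u‖ := real_inner_le_norm v u

theorem norm_sub_smul_sq_le {u v : E} {γ L t : ℝ} (ht : 0 ≤ t)
    (hmono : γ * ‖u‖ ^ 2 ≤ ⟪v, u⟫) (hlip : ‖v‖ ≤ L * ‖u‖) :
    ‖u - t • v‖ ^ 2 ≤ (1 - 2 * t * γ + t ^ 2 * L ^ 2) * ‖u‖ ^ 2 := by
  have hv : ‖v‖ ^ 2 ≤ L ^ 2 * ‖u‖ ^ 2 := by
    rw [← mul_pow]
    exact pow_le_pow_left₀ (norm_nonneg v) hlip 2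
  rw [norm_sub_sq_real, real_inner_smul_right, real_inner_comm, norm_smul,
    Real.norm_of_nonneg ht]
  nlinarith [mul_le_mul_of_nonneg_left hmono ht, mul_le_mul_of_nonneg_left hv (sq_nonneg t)]

theorem norm_sub_smul_le_sqrt_mul {u v : E} {γ L : ℝ} (hγ : 0 ≤ γ) (hL : 0 < L)
    (hmono : γ * ‖u‖ ^ 2 ≤ ⟪v, u⟫) (hlip : ‖v‖ ≤ L * ‖u‖) :
    ‖u - (γ / L ^ 2) • v‖ ≤ √(1 - (γ / L) ^ 2) * ‖u‖ := by
  have hsq := norm_sub_smul_sq_le (t := γ / L ^ 2) (by positivity) hmono hlip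
  have hcoeff : 1 - 2 * (γ / L ^ 2) * γ + (γ / L ^ 2) ^ 2 * L ^ 2 = 1 - (γ / L) ^ 2 := by
    field_simp
    ring
  rw [hcoeff] at hsq
  calc ‖u - (γ / L ^ 2) • v‖ = √(‖u - (γ / L ^ 2) • v‖ ^ 2) := (Real.sqrt_sq (norm_nonneg _)).symm
    _ ≤ √((1 - (γ / L) ^ 2) * ‖u‖ ^ 2) := Real.sqrt_le_sqrt hsq
    _ = √(1 - (γ / L) ^ 2) * ‖u‖ := by
        rw [Real.sqrt_mul' _ (sq_nonneg _), Real.sqrt_sq (norm_nonneg _)]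

def StronglyMonotoneOn (g : E → E) (γ : ℝ) (s : Set E) : Prop :=
  ∀ x ∈ s, ∀ y ∈ s, γ * ‖x - y‖ ^ 2 ≤ ⟪g x - g y, x - y⟫

namespace StronglyMonotoneOn

variable {g : E → E} {γ : ℝ} {s : Set E}

theorem norm_sub_le (hg : StronglyMonotoneOn g γ s) (hγ : 0 < γ) {x y : E} (hx : x ∈ s)
    (hy : y ∈ s) : ‖x - y‖ ≤ γ⁻¹ * ‖g x - g y‖ :=
  norm_le_inv_mul_norm_of_mul_sq_le_inner hγ (hg x hx y hy)

theorem injOn (hg : StronglyMonotoneOn g γ s) (hγ : 0 < γ) : InjOn g s := fun x hx y hy hxy => by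
  have h := hg.norm_sub_le hγ hx hy
  rw [hxy, sub_self, norm_zero, mul_zero, norm_le_zero_iff] at h
  exact sub_eq_zero.mp h

theorem lipschitzOnWith_sub_smul (hg : StronglyMonotoneOn g γ s) (hγ : 0 ≤ γ) {L : ℝ}
    (hL : 0 < L) (hlip : ∀ x ∈ s, ∀ y ∈ s, ‖g x - g y‖ ≤ L * ‖x - y‖) (y : E) :
    LipschitzOnWith ⟨√(1 - (γ / L) ^ 2), Real.sqrt_nonneg _⟩
      (fun x => x - (γ / L ^ 2) • (g x - y)) s := by
  refine LipschitzOnWith.of_dist_le_mul fun x hx x' hx' => ?_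
  have hdiff : x - (γ / L ^ 2) • (g x - y) - (x' - (γ / L ^ 2) • (g x' - y))
      = (x - x') - (γ / L ^ 2) • (g x - g x') := by
    rw [smul_sub, smul_sub, smul_sub]
    abel
  rw [dist_eq_norm, dist_eq_norm, hdiff]
  exact norm_sub_smul_le_sqrt_mul hγ hL (hg x hx x' hx') (hlip x hx x' hx')

theorem exists_eq_of_norm_le [CompleteSpace E] {x₀ : E} {δ L : ℝ}
    (hg : StronglyMonotoneOn g γ (ball x₀ δ)) (hδ : 0 < δ) (hγ : 0 < γ) (hL : 0 < L)
    (hlip : ∀ x ∈ ball x₀ δ, ∀ y ∈ ball x₀ δ, ‖g x - g y‖ ≤ L * ‖x - y‖) (hx₀ : g x₀ = 0) :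
    ∃ ε > 0, ∀ y : E, ‖y‖ ≤ ε → ∃ x ∈ ball x₀ δ, g x = y := by
  set t := γ / L ^ 2
  have ht : 0 < t := by positivity
  set κ := √(1 - (γ / L) ^ 2)
  have hκ : κ < 1 := by
    rw [Real.sqrt_lt' one_pos]
    have : 0 < (γ / L) ^ 2 := by positivity
    linarith
  have hsub : closedBall x₀ (δ / 2) ⊆ ball x₀ δ := closedBall_subset_ball (half_lt_self hδ)
  refine ⟨(1 - κ) * (δ / 2) / t, div_pos (mul_pos (sub_pos.mpr hκ) (half_pos hδ)) ht, fun y hy => ?_⟩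
  obtain ⟨x, hx, hfix⟩ := exists_isFixedPt_mem_closedBall (K := ⟨κ, Real.sqrt_nonneg _⟩) hκ
    ((hg.lipschitzOnWith_sub_smul hγ.le hL hlip y).mono hsub) (by
      rw [hx₀, dist_eq_norm, zero_sub, smul_neg, sub_neg_eq_add, add_sub_cancel_left, norm_smul,
        Real.norm_of_nonneg ht.le]
      exact (le_div_iff₀' ht).mp hy)
  refine ⟨x, hsub hx, ?_⟩
  simpa [IsFixedPt, smul_eq_zero, hγ.ne', hL.ne', sub_eq_zero] using hfix

end StronglyMonotoneOn

end InnerProductSpace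

/-- Local version of Zarantonello's lemma, local invertibility part: a locally strongly
monotone and locally Lipschitz map with a zero at `xstar` is locally invertible around `0`,
with Lipschitz continuous local inverse (Lipschitz constant `1/γ`). -/
theorem zarantonello_local_invertibility
    {X : Type*} [NormedAddCommGroup X] [InnerProductSpace ℝ X] [CompleteSpace X]
    (g : X → X) (xstar : X) (δ : ℝ) (hδ : 0 < δ)
    (γ L : ℝ) (hγ : 0 < γ) (hL : 0 < L)
    (hroot : g xstar = 0)
    (hmono : ∀ x ∈ Metric.ball xstar δ, ∀ y ∈ Metric.ball xstar δ,
      γ * ‖x - y‖ ^ 2 ≤ ⟪g x - g y, x - y⟫)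
    (hlip : ∀ x ∈ Metric.ball xstar δ, ∀ y ∈ Metric.ball xstar δ,
      ‖g x - g y‖ ≤ L * ‖x - y‖) :
    (∃ ε > 0, ∀ y : X, ‖y‖ ≤ ε → ∃! x, x ∈ Metric.ball xstar δ ∧ g x = y) ∧
    (∀ x₁ ∈ Metric.ball xstar δ, ∀ x₂ ∈ Metric.ball xstar δ,
      ∀ y₁ y₂ : X, g x₁ = y₁ → g x₂ = y₂ → ‖x₁ - x₂‖ ≤ γ⁻¹ * ‖y₁ - y₂‖) := by
  have hg : StronglyMonotoneOn g γ (ball xstar δ) := hmono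
  refine ⟨?_, ?_⟩
  · obtain ⟨ε, hε, hsolve⟩ := hg.exists_eq_of_norm_le hδ hγ hL hlip hroot
    refine ⟨ε, hε, fun y hy => ?_⟩
    obtain ⟨x, hx, hxy⟩ := hsolve y hy
    exact ⟨x, ⟨hx, hxy⟩, fun x' ⟨hx', hx'y⟩ => hg.injOn hγ hx' hx (hx'y.trans hxy.symm)⟩
  · rintro x₁ hx₁ x₂ hx₂ _ _ rfl rfl
    exact hg.norm_sub_le hγ hx₁ hx₂
end

section
/- Let X be a real Hilbert space, x* ∈ X, δ > 0, and g : X → X a map with g(x*) = 0 that is strongly monotone with constant γ > 0 and Lipschitz continuous with constant L > 0 on the closed ball of radius δ around x*. Let X_d ⊆ X be a finite-dimensional subspace with dist(x*, X_d) ≤ γδ/(γ + L). Then there exists x_d ∈ X_d with ‖x_d − x*‖ ≤ δ solving the Galerkin (projected) problem ⟨g(x_d), v⟩ = 0 for all v ∈ X_d; moreover x_d is the unique such solution in X_d intersected with the open ball B_δ(x*). -/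
open RealInnerProductSpace Metric Set

/-!
Let `w` be the orthogonal projection of `x*` onto `X_d` and `R = Lδ/(γ+L)`. Since
`‖x* - w‖ ≤ γδ/(γ+L)`, the ball of radius `R` about `w` in `X_d` lies in the ball where `g` is
controlled, and on its boundary sphere `g` points outwards:
`⟪g x, x - w⟫ ≥ ‖x - x*‖ (γ ‖x - x*‖ - L ‖x* - w‖) ≥ 0`.
In place of Brouwer's theorem we use Banach's: for `t = γ/L²` the map `x ↦ x - t P g x`
(`P` the orthogonal projection onto `X_d`) is a contraction on that ball, hence so is its
composition with the radial retraction onto the ball, and the outward-pointing condition shows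
that the fixed point was not retracted, i.e. `P g x = 0`. Uniqueness is strong monotonicity.
-/

section Retraction

variable {E : Type*} [NormedAddCommGroup E] [InnerProductSpace ℝ E]

theorem norm_sub_le_of_inner_sub_nonpos {a b p q : E} (hp : ⟪a - p, q - p⟫ ≤ 0)
    (hq : ⟪b - q, p - q⟫ ≤ 0) : ‖p - q‖ ≤ ‖a - b‖ := by
  have hsplit : ⟪a - b, p - q⟫ - ‖p - q‖ ^ 2 = -⟪a - p, q - p⟫ - ⟪b - q, p - q⟫ := by
    rw [← real_inner_self_eq_norm_sq, ← inner_sub_left, show q - p = -(p - q) by abel,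
      inner_neg_right, neg_neg, ← inner_sub_left]
    congr 1
    abel
  have hcs := real_inner_le_norm (a - b) (p - q)
  nlinarith [norm_nonneg (p - q), norm_nonneg (a - b)]

noncomputable def ballRetraction (R : ℝ) (a : E) : E :=
  if ‖a‖ ≤ R then a else (R / ‖a‖) • a

variable {R : ℝ}

theorem norm_ballRetraction_le (hR : 0 ≤ R) (a : E) : ‖ballRetraction R a‖ ≤ R := by
  unfold ballRetraction
  split_ifs with h
  · exact h
  · have ha : 0 < ‖a‖ := hR.trans_lt (not_le.mp h)
    rw [norm_smul, Real.norm_of_nonneg (div_nonneg hR ha.le), div_mul_cancel₀ _ ha.ne']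

theorem inner_sub_ballRetraction_nonpos (hR : 0 ≤ R) (a : E) {d : E} (hd : ‖d‖ ≤ R) :
    ⟪a - ballRetraction R a, d - ballRetraction R a⟫ ≤ 0 := by
  unfold ballRetraction
  split_ifs with h
  · simp
  · have ha : 0 < ‖a‖ := hR.trans_lt (not_le.mp h)
    have had : ⟪a, d⟫ ≤ R * ‖a‖ := by
      nlinarith [real_inner_le_norm a d, norm_nonneg a]
    have hsa : R / ‖a‖ * ‖a‖ ^ 2 = R * ‖a‖ := by field_simp
    rw [show a - (R / ‖a‖) • a = (1 - R / ‖a‖) • a by rw [sub_smul, one_smul],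
      real_inner_smul_left, inner_sub_right, real_inner_smul_right, real_inner_self_eq_norm_sq, hsa]
    exact mul_nonpos_of_nonneg_of_nonpos
      (by rw [sub_nonneg, div_le_one ha]; exact (not_le.mp h).le) (by linarith)

theorem norm_ballRetraction_sub_le (hR : 0 ≤ R) (a b : E) :
    ‖ballRetraction R a - ballRetraction R b‖ ≤ ‖a - b‖ :=
  norm_sub_le_of_inner_sub_nonpos
    (inner_sub_ballRetraction_nonpos hR a (norm_ballRetraction_le hR b))
    (inner_sub_ballRetraction_nonpos hR b (norm_ballRetraction_le hR a))

theorem eq_zero_of_add_ballRetraction_eq {c u v : E} {t : ℝ} (hR : 0 < R) (ht : 0 < t)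
    (hfix : c + ballRetraction R (u - t • v - c) = u) (hv : ‖u - c‖ = R → 0 ≤ ⟪v, u - c⟫) :
    v = 0 := by
  set z := u - t • v - c with hz
  unfold ballRetraction at hfix
  split_ifs at hfix with hzR
  · have htv : t • v = u - (c + z) := by
      rw [hz]
      abel
    rw [hfix, sub_self] at htv
    exact (smul_eq_zero.mp htv).resolve_left ht.ne'
  · -- the retraction was active: then `t • v` is a negative multiple of `u - c`
    exfalso
    have hz0 : 0 < ‖z‖ := hR.trans (not_le.mp hzR)
    have huc : u - c = (R / ‖z‖) • z := by
      rw [← hfix]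
      abel
    have hnorm : ‖u - c‖ = R := by
      rw [huc, norm_smul, Real.norm_of_nonneg (div_nonneg hR.le hz0.le),
        div_mul_cancel₀ _ hz0.ne']
    have hzuc : z = (‖z‖ / R) • (u - c) := by
      rw [huc, smul_smul, show ‖z‖ / R * (R / ‖z‖) = 1 by field_simp, one_smul]
    have htv : t • v = (1 - ‖z‖ / R) • (u - c) := by
      rw [sub_smul, one_smul, ← hzuc, hz]
      abel
    have hinner : t * ⟪v, u - c⟫ = (1 - ‖z‖ / R) * R ^ 2 := by
      rw [← real_inner_smul_left, htv, real_inner_smul_left, real_inner_self_eq_norm_sq, hnorm]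
    have hneg : 1 - ‖z‖ / R < 0 := by
      rw [sub_neg, one_lt_div hR]
      exact not_le.mp hzR
    nlinarith [hv hnorm, pow_pos hR 2]

end Retraction

section StronglyMonotone

variable {E : Type*} [NormedAddCommGroup E] [InnerProductSpace ℝ E]

theorem norm_sub_smul_le_sqrt_mul_norm {d e : E} {γ L : ℝ} (hγ : 0 ≤ γ) (hL : 0 < L)
    (hde : γ * ‖d‖ ^ 2 ≤ ⟪e, d⟫) (he : ‖e‖ ≤ L * ‖d‖) :
    ‖d - (γ / L ^ 2) • e‖ ≤ √(1 - γ ^ 2 / L ^ 2) * ‖d‖ := by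
  set t := γ / L ^ 2 with ht
  have htL : t * L ^ 2 = γ := by rw [ht]; field_simp
  have hsq : ‖d - t • e‖ ^ 2 ≤ (1 - γ ^ 2 / L ^ 2) * ‖d‖ ^ 2 := by
    have he2 : ‖e‖ ^ 2 ≤ L ^ 2 * ‖d‖ ^ 2 := by
      rw [← mul_pow]
      exact pow_le_pow_left₀ (norm_nonneg e) he 2
    have ht0 : 0 ≤ t := by positivity
    rw [norm_sub_sq_real, real_inner_smul_right, norm_smul, Real.norm_of_nonneg ht0,
      real_inner_comm, show γ ^ 2 / L ^ 2 = t * γ by rw [← htL]; field_simp]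
    have htt : t ^ 2 * (L ^ 2 * ‖d‖ ^ 2) = t * γ * ‖d‖ ^ 2 := by rw [← htL]; ring
    rw [mul_pow]
    linarith [mul_le_mul_of_nonneg_left hde ht0, mul_le_mul_of_nonneg_left he2 (sq_nonneg t)]
  calc ‖d - t • e‖ = √(‖d - t • e‖ ^ 2) := (Real.sqrt_sq (norm_nonneg _)).symm
    _ ≤ √((1 - γ ^ 2 / L ^ 2) * ‖d‖ ^ 2) := Real.sqrt_le_sqrt hsq
    _ = √(1 - γ ^ 2 / L ^ 2) * ‖d‖ := by
      rw [Real.sqrt_mul' _ (sq_nonneg _), Real.sqrt_sq (norm_nonneg _)]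

theorem exists_mem_closedBall_eq_zero_of_inner_nonneg_on_sphere [CompleteSpace E] {G : E → E}
    {c : E} {R γ L : ℝ} (hR : 0 < R) (hγ : 0 < γ) (hL : 0 < L)
    (hmono : ∀ x ∈ closedBall c R, ∀ y ∈ closedBall c R, γ * ‖x - y‖ ^ 2 ≤ ⟪G x - G y, x - y⟫)
    (hlip : ∀ x ∈ closedBall c R, ∀ y ∈ closedBall c R, ‖G x - G y‖ ≤ L * ‖x - y‖)
    (hsphere : ∀ x ∈ sphere c R, 0 ≤ ⟪G x, x - c⟫) :
    ∃ u ∈ closedBall c R, G u = 0 := by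
  set t := γ / L ^ 2
  set T : E → E := fun x => c + ballRetraction R (x - t • G x - c)
  have hmaps : MapsTo T (closedBall c R) (closedBall c R) := fun x _ => by
    simpa [T, dist_eq_norm] using norm_ballRetraction_le hR.le (x - t • G x - c)
  set k : NNReal := ⟨√(1 - γ ^ 2 / L ^ 2), Real.sqrt_nonneg _⟩
  have hk : k < 1 := by
    rw [← NNReal.coe_lt_coe]
    change √(1 - γ ^ 2 / L ^ 2) < 1
    rw [Real.sqrt_lt' one_pos]
    have : 0 < γ ^ 2 / L ^ 2 := by positivity
    linarith
  have hT : LipschitzOnWith k T (closedBall c R) := .of_dist_le_mul fun x hx y hy =>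
    calc dist (T x) (T y)
        = ‖ballRetraction R (x - t • G x - c) - ballRetraction R (y - t • G y - c)‖ := by
          simp [T, dist_eq_norm]
      _ ≤ ‖(x - y) - t • (G x - G y)‖ :=
          (norm_ballRetraction_sub_le hR.le _ _).trans_eq (by rw [smul_sub]; congr 1; abel)
      _ ≤ k * dist x y := by
          rw [dist_eq_norm]
          exact norm_sub_smul_le_sqrt_mul_norm hγ.le hL (hmono x hx y hy) (hlip x hx y hy)
  obtain ⟨u, hu, hfix, -⟩ := ContractingWith.exists_fixedPoint' isClosed_closedBall.isComplete
    hmaps ⟨hk, hT.mapsToRestrict hmaps⟩ (mem_closedBall_self hR.le) (edist_ne_top _ _)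
  exact ⟨u, hu, eq_zero_of_add_ballRetraction_eq hR (by positivity) hfix
    fun h => hsphere u (mem_sphere_iff_norm.mpr h)⟩

end StronglyMonotone

namespace Submodule

variable {X : Type*} [NormedAddCommGroup X] [InnerProductSpace ℝ X] (K : Submodule ℝ X)
  [K.HasOrthogonalProjection]

theorem norm_sub_starProjection_eq_infDist (x : X) :
    ‖x - K.starProjection x‖ = infDist x (K : Set X) := by
  rw [starProjection_minimal, infDist_eq_iInf]
  simp only [dist_eq_norm]
  rfl

theorem norm_sub_starProjection_le {x y : X} (hy : y ∈ K) :
    ‖y - K.starProjection x‖ ≤ ‖y - x‖ := by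
  simpa [K.starProjection_eq_self_iff.mpr hy] using K.norm_starProjection_apply_le (y - x)

end Submodule

section Galerkin

variable {X : Type*} [NormedAddCommGroup X] [InnerProductSpace ℝ X]

theorem exists_galerkin_solution (K : Submodule ℝ X) [FiniteDimensional ℝ K] {g : X → X}
    {c : X} (hc : c ∈ K) {R γ L : ℝ} (hR : 0 < R) (hγ : 0 < γ) (hL : 0 < L)
    (hmono : ∀ x ∈ (K : Set X) ∩ closedBall c R, ∀ y ∈ (K : Set X) ∩ closedBall c R,
      γ * ‖x - y‖ ^ 2 ≤ ⟪g x - g y, x - y⟫)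
    (hlip : ∀ x ∈ (K : Set X) ∩ closedBall c R, ∀ y ∈ (K : Set X) ∩ closedBall c R,
      ‖g x - g y‖ ≤ L * ‖x - y‖)
    (hsphere : ∀ x ∈ (K : Set X) ∩ sphere c R, 0 ≤ ⟪g x, x - c⟫) :
    ∃ u ∈ (K : Set X) ∩ closedBall c R, ∀ v ∈ K, ⟪g u, v⟫ = 0 := by
  have hball {x : K} : x ∈ closedBall ⟨c, hc⟩ R ↔ (x : X) ∈ (K : Set X) ∩ closedBall c R := by
    simp [dist_eq_norm]
  obtain ⟨u, hu, hGu⟩ := exists_mem_closedBall_eq_zero_of_inner_nonneg_on_sphere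
    (G := fun y => K.orthogonalProjectionOnto (g y)) (c := ⟨c, hc⟩) hR hγ hL
    (fun x hx y hy => by
      simpa [← map_sub] using hmono x (hball.mp hx) y (hball.mp hy))
    (fun x hx y hy => by
      simpa [← map_sub] using (K.norm_orthogonalProjectionOnto_apply_le _).trans
        (hlip x (hball.mp hx) y (hball.mp hy)))
    (fun x hx => by
      simpa using hsphere x ⟨x.2, by simpa [dist_eq_norm] using hx⟩)
  refine ⟨u, hball.mp hu, fun v hv => ?_⟩
  simpa using congrArg (⟪·, (⟨v, hv⟩ : K)⟫) hGu

theorem eq_of_inner_eq_zero_of_strongly_monotone {g : X → X} {x y : X} {γ : ℝ} (hγ : 0 < γ)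
    (hmono : γ * ‖x - y‖ ^ 2 ≤ ⟪g x - g y, x - y⟫) (hx : ⟪g x, x - y⟫ = 0)
    (hy : ⟪g y, x - y⟫ = 0) : x = y := by
  rw [inner_sub_left, hx, hy, sub_zero] at hmono
  have : ‖x - y‖ ^ 2 = 0 := le_antisymm (nonpos_of_mul_nonpos_right hmono hγ) (sq_nonneg _)
  simpa [sub_eq_zero] using this

theorem inner_nonneg_of_strongly_monotone_at_root {g : X → X} {xstar w x : X} {γ L : ℝ}
    (hroot : g xstar = 0) (hmono : γ * ‖x - xstar‖ ^ 2 ≤ ⟪g x - g xstar, x - xstar⟫)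
    (hlip : ‖g x - g xstar‖ ≤ L * ‖x - xstar‖) (hfar : L * ‖xstar - w‖ ≤ γ * ‖x - xstar‖) :
    0 ≤ ⟪g x, x - w⟫ := by
  rw [hroot, sub_zero] at hmono hlip
  have hsplit : ⟪g x, x - w⟫ = ⟪g x, x - xstar⟫ + ⟪g x, xstar - w⟫ := by
    rw [← inner_add_right, sub_add_sub_cancel]
  have hcs : -(‖g x‖ * ‖xstar - w‖) ≤ ⟪g x, xstar - w⟫ :=
    neg_le_of_abs_le (abs_real_inner_le_norm _ _)
  nlinarith [mul_le_mul_of_nonneg_right hlip (norm_nonneg (xstar - w)),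
    mul_nonneg (norm_nonneg (x - xstar)) (sub_nonneg.mpr hfar)]

end Galerkin

theorem galerkin_existence_uniqueness_general
    {X : Type*} [NormedAddCommGroup X] [InnerProductSpace ℝ X]
    (g : X → X) (xstar : X) (δ : ℝ) (hδ : 0 < δ)
    (γ L : ℝ) (hγ : 0 < γ) (hL : 0 < L)
    (hroot : g xstar = 0)
    (hmono : ∀ x ∈ Metric.closedBall xstar δ, ∀ y ∈ Metric.closedBall xstar δ,
      γ * ‖x - y‖ ^ 2 ≤ ⟪g x - g y, x - y⟫)
    (hlip : ∀ x ∈ Metric.closedBall xstar δ, ∀ y ∈ Metric.closedBall xstar δ,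
      ‖g x - g y‖ ≤ L * ‖x - y‖)
    (Xd : Submodule ℝ X) [FiniteDimensional ℝ Xd]
    (hdist : Metric.infDist xstar (Xd : Set X) ≤ γ * δ / (γ + L)) :
    ∃ xd ∈ Xd, ‖xd - xstar‖ ≤ δ ∧ (∀ v ∈ Xd, ⟪g xd, v⟫ = 0) ∧
      (∀ x ∈ Xd, x ∈ Metric.ball xstar δ → (∀ v ∈ Xd, ⟪g x, v⟫ = 0) → x = xd) := by
  set w := Xd.starProjection xstar
  have hρ : ‖xstar - w‖ ≤ γ * δ / (γ + L) :=
    (Xd.norm_sub_starProjection_eq_infDist xstar).trans_le hdist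
  have hsub : (Xd : Set X) ∩ closedBall w (L * δ / (γ + L)) ⊆ closedBall xstar δ :=
    fun x ⟨_, hxR⟩ => by
      rw [mem_closedBall, dist_eq_norm] at hxR ⊢
      calc ‖x - xstar‖ ≤ ‖x - w‖ + ‖w - xstar‖ := norm_sub_le_norm_sub_add_norm_sub _ _ _
        _ ≤ L * δ / (γ + L) + γ * δ / (γ + L) := add_le_add hxR (by rwa [norm_sub_rev])
        _ = δ := by field_simp; ring
  have hxstar := mem_closedBall_self (x := xstar) hδ.le
  obtain ⟨u, hu, hsol⟩ := exists_galerkin_solution Xd (Xd.starProjection_apply_mem xstar)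
    (by positivity) hγ hL (fun x hx y hy => hmono x (hsub hx) y (hsub hy))
    (fun x hx y hy => hlip x (hsub hx) y (hsub hy)) fun x ⟨hx, hxR⟩ => by
      have hx' := hsub ⟨hx, sphere_subset_closedBall hxR⟩
      refine inner_nonneg_of_strongly_monotone_at_root hroot (hmono x hx' xstar hxstar)
        (hlip x hx' xstar hxstar) ?_
      calc L * ‖xstar - w‖ ≤ L * (γ * δ / (γ + L)) := by gcongr
        _ = γ * ‖x - w‖ := by rw [mem_sphere_iff_norm.mp hxR]; ring
        _ ≤ γ * ‖x - xstar‖ := by gcongr; exact Xd.norm_sub_starProjection_le hx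
  refine ⟨u, hu.1, by simpa [dist_eq_norm] using hsub hu, hsol, fun x hx hxball hxsol => ?_⟩
  exact eq_of_inner_eq_zero_of_strongly_monotone hγ
    (hmono x (ball_subset_closedBall hxball) u (hsub hu))
    (hxsol _ (Xd.sub_mem hx hu.1)) (hsol _ (Xd.sub_mem hx hu.1))

/-- Existence and local uniqueness of discrete Galerkin solutions for a strongly monotone,
Lipschitz continuous map (Zarantonello's lemma, Galerkin part; proved via Brouwer's fixed
point theorem). -/
theorem galerkin_existence_uniqueness
    {X : Type*} [NormedAddCommGroup X] [InnerProductSpace ℝ X] [CompleteSpace X]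
    (g : X → X) (xstar : X) (δ : ℝ) (hδ : 0 < δ)
    (γ L : ℝ) (hγ : 0 < γ) (hL : 0 < L)
    (hroot : g xstar = 0)
    (hmono : ∀ x ∈ Metric.closedBall xstar δ, ∀ y ∈ Metric.closedBall xstar δ,
      γ * ‖x - y‖ ^ 2 ≤ ⟪g x - g y, x - y⟫)
    (hlip : ∀ x ∈ Metric.closedBall xstar δ, ∀ y ∈ Metric.closedBall xstar δ,
      ‖g x - g y‖ ≤ L * ‖x - y‖)
    (Xd : Submodule ℝ X) [FiniteDimensional ℝ Xd]
    (hdist : Metric.infDist xstar (Xd : Set X) ≤ γ * δ / (γ + L)) :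
    ∃ xd ∈ Xd, ‖xd - xstar‖ ≤ δ ∧ (∀ v ∈ Xd, ⟪g xd, v⟫ = 0) ∧
      (∀ x ∈ Xd, x ∈ Metric.ball xstar δ → (∀ v ∈ Xd, ⟪g x, v⟫ = 0) → x = xd) :=
  galerkin_existence_uniqueness_general g xstar δ hδ γ L hγ hL hroot hmono hlip Xd hdist
end

section
/- Let V be a real vector space equipped with a norm ‖·‖_V and a seminorm ‖·‖_H, and let B : V → ℝ be a function (the quadratic form ψ ↦ ⟨ψ, (F − Λ₀)ψ⟩ of the shifted Fock operator). Suppose there are constants c > 0 and μ ≥ 0 (μ = Λ₀ + e, where e is the Gårding constant) such that B(ψ) + μ‖ψ‖_H² ≥ c‖ψ‖_V² for all ψ ∈ V, and a subset U ⊆ V and a constant ε₀ > 0 (the CAS-ext gap) such that B(ψ) ≥ ε₀‖ψ‖_H² for all ψ ∈ U. Then, with η := c·ε₀/(ε₀ + μ) > 0, one has B(ψ) ≥ η‖ψ‖_V² for all ψ ∈ U. -/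
theorem coercivity_bound_of_garding_of_gap {b x h c μ ε₀ : ℝ} (hμ : 0 ≤ μ) (hε₀ : 0 < ε₀)
    (hgarding : c * x ≤ b + μ * h) (hgap : ε₀ * h ≤ b) :
    c * ε₀ / (ε₀ + μ) * x ≤ b := by
  have key : c * ε₀ * x ≤ (ε₀ + μ) * b :=
    calc c * ε₀ * x = ε₀ * (c * x) := by ring
      _ ≤ ε₀ * (b + μ * h) := mul_le_mul_of_nonneg_left hgarding hε₀.le
      _ = ε₀ * b + μ * (ε₀ * h) := by ring
      _ ≤ ε₀ * b + μ * b := by gcongr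
      _ = (ε₀ + μ) * b := by ring
  rw [div_mul_eq_mul_div, div_le_iff₀ (add_pos_of_pos_of_nonneg hε₀ hμ)]
  linarith

/-- Core coercivity estimate (Lemma "H1"): a Gårding-type inequality for a quadratic form `B`
with respect to a norm `‖·‖` (the `H¹`-norm) and a seminorm `nH` (the `L²`-norm), together
with a spectral-gap estimate `B ψ ≥ ε₀ (nH ψ)²` on a subset `U` (the external space), yields
coercivity `B ψ ≥ η ‖ψ‖²` on `U` with the explicit constant `η = c·ε₀/(ε₀ + μ)`. -/
theorem garding_gap_coercivity
    {V : Type*} [NormedAddCommGroup V] [NormedSpace ℝ V]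
    (nH : Seminorm ℝ V) (B : V → ℝ)
    (c μ : ℝ) (hc : 0 < c) (hμ : 0 ≤ μ)
    (hgarding : ∀ ψ : V, c * ‖ψ‖ ^ 2 ≤ B ψ + μ * (nH ψ) ^ 2)
    (U : Set V) (ε₀ : ℝ) (hε₀ : 0 < ε₀)
    (hgap : ∀ ψ ∈ U, ε₀ * (nH ψ) ^ 2 ≤ B ψ) :
    0 < c * ε₀ / (ε₀ + μ) ∧ ∀ ψ ∈ U, (c * ε₀ / (ε₀ + μ)) * ‖ψ‖ ^ 2 ≤ B ψ :=
  ⟨div_pos (mul_pos hc hε₀) (add_pos_of_pos_of_nonneg hε₀ hμ),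
    fun ψ hψ => coercivity_bound_of_garding_of_gap hμ hε₀ (hgarding ψ) (hgap ψ hψ)⟩
end

section
/- Let A be a complete normed algebra (Banach algebra) over ℝ, H ∈ A, and let S be a closed subalgebra of A whose elements pairwise commute. Then the map g : S → A defined by g(T) = exp(−T) · H · exp(T) is Fréchet differentiable at every T ∈ S, with derivative given by (Dg(T))(U) = exp(−T) · (H·U − U·H) · exp(T) for U ∈ S. -/
/-!
A closed commutative subalgebra `S` is itself a commutative Banach algebra, on which
`exp` has derivative `U ↦ exp T * U`, and the inclusion `S → A` commutes with `exp`.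
The product rule applied to `exp (-T) * H * exp T` then gives
`-exp (-T) * U * H * exp T + exp (-T) * H * exp T * U`, and `U` commutes with `exp T`.
-/

open NormedSpace

namespace Subalgebra

variable {𝕂 A : Type*} [RCLike 𝕂] [NormedRing A] [NormedAlgebra 𝕂 A] (S : Subalgebra 𝕂 A)
  [CompleteSpace S]

theorem coe_exp (T : S) : ((exp T : S) : A) = exp (T : A) :=
  map_exp_of_mem_ball (𝕂 := 𝕂) S.val continuous_subtype_val T <|
    (expSeries_radius_eq_top 𝕂 S).symm ▸ edist_lt_top _ _

theorem hasFDerivAt_exp_coe (hcomm : ∀ T U : S, T * U = U * T) (T : S) :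
    HasFDerivAt (fun U : S => exp (U : A))
      ((ContinuousLinearMap.mul 𝕂 A (exp (T : A))).comp S.toSubmodule.subtypeL) T := by
  let _ : NormedCommRing S := { (inferInstance : NormedRing S) with mul_comm := hcomm }
  have h := S.toSubmodule.subtypeL.hasFDerivAt.comp T (hasFDerivAt_exp (𝕂 := 𝕂) (x := T))
  simp only [Function.comp_def, Submodule.subtypeL_apply, coe_exp] at h
  refine h.congr_fderiv ?_
  ext U
  change ((exp T * U : S) : A) = exp (T : A) * U
  rw [MulMemClass.coe_mul, coe_exp]

end Subalgebra

/-- Differentiability of the similarity-transformed Hamiltonian: if `S` is a closed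
subalgebra of a real Banach algebra `A` whose elements pairwise commute, then
`T ↦ exp(−T)·H·exp(T)` is Fréchet differentiable at every `T ∈ S`, with derivative
`U ↦ exp(−T)·(H·U − U·H)·exp(T)`. -/
theorem hasFDerivAt_exp_conj
    {A : Type*} [NormedRing A] [NormedAlgebra ℝ A] [CompleteSpace A]
    (S : Subalgebra ℝ A) (hclosed : IsClosed (S : Set A))
    (hcommS : ∀ T U : S, T * U = U * T) (H : A) :
    ∀ T : S, ∃ D : S →L[ℝ] A,
      HasFDerivAt (fun T : S => NormedSpace.exp (-(T : A)) * H * NormedSpace.exp (T : A))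
        D T ∧
      ∀ U : S, D U
        = NormedSpace.exp (-(T : A)) * (H * (U : A) - (U : A) * H)
            * NormedSpace.exp (T : A) := by
  intro T
  have : CompleteSpace S := hclosed.completeSpace_coe
  have hexp_neg := (S.hasFDerivAt_exp_coe hcommS (-T)).comp T (hasFDerivAt_id T).neg
  refine ⟨_, (hexp_neg.mul_const' H).mul' (S.hasFDerivAt_exp_coe hcommS T), fun U => ?_⟩
  have hU : Commute (S.toSubmodule.subtypeL U) (exp (T : A)) :=
    Commute.exp_right (congrArg Subtype.val (hcommS U T))
  simp only [Function.comp_apply, NegMemClass.coe_neg, ContinuousLinearMap.comp_neg,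
    ContinuousLinearMap.comp_id, smul_neg, add_apply, smul_apply, ContinuousLinearMap.comp_apply,
    ContinuousLinearMap.mul_apply', smul_eq_mul, neg_apply, MulOpposite.smul_eq_mul_unop,
    MulOpposite.unop_op]
  rw [← hU.eq]
  noncomm_ring
end

section
/- Let K, N, k, n be natural numbers with 1 ≤ n ≤ N ≤ k < K, and let λ : {1, …, K} → ℝ be nondecreasing with ε₀ := λ(k+1) − λ(k) > 0. Set δ := (λ(k+1) + λ(k))/2. Let (A_j, I_j), j = 1, …, n, be pairs of indices with 1 ≤ I_j ≤ N and N + 1 ≤ A_j ≤ K, and assume that A_j ≥ k + 1 for at least one j (the excitation is 'external'). Define ε := Σ_{j=1}^{n} (λ(A_j) − λ(I_j)) and λ̄ := max_{1≤j≤n} λ(A_j) − δ. Then λ̄ ≤ ε and ε ≤ N·(1 + 2(δ − λ(1))/ε₀)·λ̄; in particular, C⁻¹·ε ≤ λ̄ ≤ ε with C := N·(1 + 2(δ − λ(1))/ε₀). -/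
/-!
Let `M` be the largest virtual energy and `δ` the gap midpoint. Every occupied energy lies in
`[λ(1), λ(k)]`, below `δ`, so the term of `ε` carrying `M` alone is already at least `M - δ`,
while each of the at most `N` terms is at most `M - λ(1) = (δ - λ(1)) + (M - δ)`. Externality
gives `M ≥ λ(k+1)`, i.e. `M - δ ≥ ε₀ / 2`, which turns the constant `δ - λ(1)` into the
multiple `2 (δ - λ(1)) / ε₀` of `M - δ`.
-/

open Finset

section SupSum

variable {ι : Type*} {s : Finset ι} (hs : s.Nonempty) {a b : ι → ℝ}

include hs in
theorem sup'_sub_le_sum_sub {d : ℝ} (hbd : ∀ j ∈ s, b j ≤ d) (hba : ∀ j ∈ s, b j ≤ a j) :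
    s.sup' hs a - d ≤ ∑ j ∈ s, (a j - b j) := by
  obtain ⟨j, hj, hmax⟩ := s.exists_mem_eq_sup' hs a
  calc s.sup' hs a - d ≤ a j - b j := by rw [hmax]; linarith [hbd j hj]
    _ ≤ ∑ j ∈ s, (a j - b j) :=
      single_le_sum (fun i hi => sub_nonneg.mpr (hba i hi)) hj

theorem sum_sub_le_card_mul_sup'_sub {m : ℝ} (hmb : ∀ j ∈ s, m ≤ b j) :
    ∑ j ∈ s, (a j - b j) ≤ #s * (s.sup' hs a - m) := by
  rw [← nsmul_eq_mul]
  exact sum_le_card_nsmul _ _ _ fun j hj => by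
    linarith [hmb j hj, le_sup' a hj]

end SupSum

theorem add_le_one_add_two_mul_div_mul {c g x : ℝ} (hg : 0 < g) (hc : 0 ≤ c)
    (hx : g / 2 ≤ x) : c + x ≤ (1 + 2 * c / g) * x := by
  have hcx : c * g ≤ 2 * c * x := by nlinarith
  have : c ≤ 2 * c / g * x := by
    rw [div_mul_eq_mul_div, le_div_iff₀ hg]; linarith
  linarith

theorem external_excitation_energy_comparison_general
    (K N k n : ℕ) (hn : 1 ≤ n) (hnN : n ≤ N) (hNk : N ≤ k)
    (lam : ℕ → ℝ) (hmono : ∀ i j, 1 ≤ i → i ≤ j → j ≤ K → lam i ≤ lam j)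
    (hgap : 0 < lam (k + 1) - lam k)
    (A I : Fin n → ℕ)
    (hI : ∀ j, 1 ≤ I j ∧ I j ≤ N) (hA : ∀ j, N + 1 ≤ A j ∧ A j ≤ K)
    (hext : ∃ j, k + 1 ≤ A j) :
    (Finset.univ.sup' (Finset.univ_nonempty_iff.mpr ⟨⟨0, hn⟩⟩) (fun j => lam (A j))
        - (lam (k + 1) + lam k) / 2)
      ≤ ∑ j, (lam (A j) - lam (I j)) ∧
    ∑ j, (lam (A j) - lam (I j))
      ≤ (N : ℝ) * (1 + 2 * ((lam (k + 1) + lam k) / 2 - lam 1) / (lam (k + 1) - lam k))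
        * (Finset.univ.sup' (Finset.univ_nonempty_iff.mpr ⟨⟨0, hn⟩⟩) (fun j => lam (A j))
            - (lam (k + 1) + lam k) / 2) := by
  obtain ⟨j₀, hj₀⟩ := hext
  have hkK : k < K := by have := (hA j₀).2; omega
  set M := univ.sup' (univ_nonempty_iff.mpr ⟨⟨0, hn⟩⟩) fun j => lam (A j)
  set δ := (lam (k + 1) + lam k) / 2 with hδ
  have hocc_le : ∀ j, lam (I j) ≤ lam k := fun j =>
    hmono _ _ (hI j).1 (by have := (hI j).2; omega) (by omega)
  have hocc_ge : ∀ j, lam 1 ≤ lam (I j) := fun j =>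
    hmono _ _ le_rfl (hI j).1 (by have := (hI j).2; omega)
  have hocc_le_virt : ∀ j, lam (I j) ≤ lam (A j) := fun j =>
    hmono _ _ (hI j).1 (by have := (hI j).2; have := (hA j).1; omega) (hA j).2
  have hM_ge : lam (k + 1) ≤ M :=
    (hmono _ _ (by omega) hj₀ (hA j₀).2).trans (le_sup' (fun j => lam (A j)) (mem_univ j₀))
  have hδ_ge : lam 1 ≤ δ := by linarith [hocc_ge j₀, hocc_le j₀]
  have hM_sub_δ : (lam (k + 1) - lam k) / 2 ≤ M - δ := by linarith
  refine ⟨sup'_sub_le_sum_sub _ (fun j _ => by linarith [hocc_le j])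
    (fun j _ => hocc_le_virt j), ?_⟩
  calc ∑ j, (lam (A j) - lam (I j)) ≤ n * (M - lam 1) := by
        simpa only [card_univ, Fintype.card_fin] using
          sum_sub_le_card_mul_sup'_sub (univ_nonempty_iff.mpr ⟨⟨0, hn⟩⟩) fun j _ => hocc_ge j
    _ ≤ N * ((δ - lam 1) + (M - δ)) := by
        rw [sub_add_sub_cancel']
        gcongr
        linarith
    _ ≤ N * (1 + 2 * (δ - lam 1) / (lam (k + 1) - lam k)) * (M - δ) := by
        rw [mul_assoc]
        gcongr
        exact add_le_one_add_two_mul_div_mul hgap (by linarith) hM_sub_δ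

/-- Comparability of the excitation energy of an external excitation with the maximal
virtual single-particle energy shifted by the gap midpoint (Lemma on ε_ν ∼ λ̄_ν):
`λ̄ ≤ ε ≤ N·(1 + 2(δ − λ(1))/ε₀)·λ̄` for any external excitation. -/
theorem external_excitation_energy_comparison
    (K N k n : ℕ) (hn : 1 ≤ n) (hnN : n ≤ N) (hNk : N ≤ k) (hkK : k < K)
    (lam : ℕ → ℝ) (hmono : ∀ i j, 1 ≤ i → i ≤ j → j ≤ K → lam i ≤ lam j)
    (hgap : 0 < lam (k + 1) - lam k)
    (A I : Fin n → ℕ)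
    (hI : ∀ j, 1 ≤ I j ∧ I j ≤ N) (hA : ∀ j, N + 1 ≤ A j ∧ A j ≤ K)
    (hext : ∃ j, k + 1 ≤ A j) :
    (Finset.univ.sup' (Finset.univ_nonempty_iff.mpr ⟨⟨0, hn⟩⟩) (fun j => lam (A j))
        - (lam (k + 1) + lam k) / 2)
      ≤ ∑ j, (lam (A j) - lam (I j)) ∧
    ∑ j, (lam (A j) - lam (I j))
      ≤ (N : ℝ) * (1 + 2 * ((lam (k + 1) + lam k) / 2 - lam 1) / (lam (k + 1) - lam k))
        * (Finset.univ.sup' (Finset.univ_nonempty_iff.mpr ⟨⟨0, hn⟩⟩) (fun j => lam (A j))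
            - (lam (k + 1) + lam k) / 2) :=
  external_excitation_energy_comparison_general K N k n hn hnN hNk lam hmono hgap A I hI hA hext
end

section
/- Let K, N, k, n be natural numbers with 1 ≤ n ≤ N ≤ k < K, and let λ : {1, …, K} → ℝ be nondecreasing with ε₀ := λ(k+1) − λ(k) > 0; set δ := (λ(k+1) + λ(k))/2. Then there exists a constant C ≥ 0, depending only on N, λ(1), λ(k), λ(k+1), with the following property. Let (A_j, I_j), j = 1, …, n, be pairs with 1 ≤ I_j ≤ N and N + 1 ≤ A_j ≤ K (the combined excitation ν), let s ⊆ {1, …, n} be a subset (the pairs of the excitation α) with complement sᶜ (the pairs of the excitation μ), and for a subset S define ε_S := Σ_{j∈S} (λ(A_j) − λ(I_j)). Assume α is external, i.e., A_j ≥ k + 1 for some j ∈ s. Then: (i) if μ is also external (A_j ≥ k + 1 for some j ∈ sᶜ), then ε_{{1,…,n}} ≤ C · ε_s · ε_{sᶜ}; (ii) if μ is not external (A_j ≤ k for all j ∈ sᶜ), then ε_{{1,…,n}} ≤ C · ε_s. -/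
/-!
An external excitation energy is at least the gap `ε₀`, since it contains a term
`λ(A) - λ(I)` with `I ≤ N ≤ k < A`, and all terms are nonnegative. If both parts are external,
`ε_α + ε_μ ≤ (2 / ε₀) ε_α ε_μ` because both are `≥ ε₀`. If `μ` is internal, each of its at most
`N` terms is at most `λ(k) - λ(1)`, so `ε_μ ≤ M := N (λ(k) - λ(1)) ≤ (M / ε₀) ε_α`. Hence
`C := max (2 / ε₀) (1 + M / ε₀)` works.
-/

section ExcitationEnergy

variable {K N n : ℕ} {lam : ℕ → ℝ} {A I : Fin n → ℕ}

theorem excitation_energy_nonneg (hlam : MonotoneOn lam (Set.Icc 1 K))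
    (hI : ∀ j, I j ∈ Set.Icc 1 N) (hA : ∀ j, A j ∈ Set.Icc (N + 1) K) (j : Fin n) :
    0 ≤ lam (A j) - lam (I j) := by
  obtain ⟨hNA, hAK⟩ := hA j
  obtain ⟨hI1, hIN⟩ := hI j
  exact sub_nonneg.2 (hlam ⟨hI1, by omega⟩ ⟨by omega, hAK⟩ (by omega))

theorem gap_le_sum_excitation_energy {k : ℕ} (hlam : MonotoneOn lam (Set.Icc 1 K))
    (hNk : N ≤ k) (hI : ∀ j, I j ∈ Set.Icc 1 N) (hA : ∀ j, A j ∈ Set.Icc (N + 1) K)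
    {t : Finset (Fin n)} (ht : ∃ j ∈ t, k + 1 ≤ A j) :
    lam (k + 1) - lam k ≤ ∑ j ∈ t, (lam (A j) - lam (I j)) := by
  obtain ⟨j, hjt, hj⟩ := ht
  obtain ⟨hNA, hAK⟩ := hA j
  obtain ⟨hI1, hIN⟩ := hI j
  calc lam (k + 1) - lam k ≤ lam (A j) - lam (I j) :=
        sub_le_sub (hlam ⟨by omega, by omega⟩ ⟨by omega, hAK⟩ hj)
          (hlam ⟨hI1, by omega⟩ ⟨by omega, by omega⟩ (hIN.trans hNk))
    _ ≤ ∑ j ∈ t, (lam (A j) - lam (I j)) :=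
        Finset.single_le_sum (fun i _ => excitation_energy_nonneg hlam hI hA i) hjt

theorem sum_excitation_energy_le_of_forall_le {k : ℕ} (hlam : MonotoneOn lam (Set.Icc 1 K))
    (hk : k ∈ Set.Icc 1 K) (hn : n ≤ N) (hI : ∀ j, I j ∈ Set.Icc 1 N)
    (hA : ∀ j, A j ∈ Set.Icc (N + 1) K) {t : Finset (Fin n)} (ht : ∀ j ∈ t, A j ≤ k) :
    ∑ j ∈ t, (lam (A j) - lam (I j)) ≤ N * (lam k - lam 1) := by
  have hK : (1 : ℕ) ∈ Set.Icc 1 K := ⟨le_rfl, hk.1.trans hk.2⟩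
  have hterm : ∀ j ∈ t, lam (A j) - lam (I j) ≤ lam k - lam 1 := fun j hj => by
    obtain ⟨hNA, hAK⟩ := hA j
    obtain ⟨hI1, hIN⟩ := hI j
    exact sub_le_sub (hlam ⟨by omega, hAK⟩ hk (ht j hj)) (hlam hK ⟨hI1, by omega⟩ hI1)
  have hcard : (t.card : ℝ) ≤ N := by
    exact_mod_cast (t.card_le_univ.trans_eq (Fintype.card_fin n)).trans hn
  calc ∑ j ∈ t, (lam (A j) - lam (I j)) ≤ t.card * (lam k - lam 1) := by
        simpa using Finset.sum_le_card_nsmul t _ _ hterm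
    _ ≤ N * (lam k - lam 1) := by
        gcongr
        exact sub_nonneg.2 (hlam hK hk hk.1)

end ExcitationEnergy

theorem add_le_two_div_mul_mul {ε a b : ℝ} (hε : 0 < ε) (ha : ε ≤ a) (hb : ε ≤ b) :
    a + b ≤ 2 / ε * a * b := by
  have ha' : 1 ≤ a / ε := (one_le_div hε).2 ha
  have hb' : 1 ≤ b / ε := (one_le_div hε).2 hb
  calc a + b = a * 1 + 1 * b := by ring
    _ ≤ a * (b / ε) + a / ε * b := by gcongr <;> linarith
    _ = 2 / ε * a * b := by ring

theorem add_le_one_add_div_mul {ε a b M : ℝ} (hε : 0 < ε) (ha : ε ≤ a) (hb : b ≤ M)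
    (hM : 0 ≤ M) : a + b ≤ (1 + M / ε) * a := by
  have : b ≤ M / ε * a :=
    calc b ≤ M / ε * ε := by rwa [div_mul_cancel₀ M hε.ne']
      _ ≤ M / ε * a := by gcongr
  linarith

/-- The key excitation-energy estimates (Lemma on ε_ν, ε_α, ε_μ): there exists a constant
`C ≥ 0`, depending only on `N, λ(1), λ(k), λ(k+1)`, such that for every external excitation
`ν` split into a necessarily external part `α` (indexed by `s`) and a part `μ` (indexed by
`sᶜ`), one has `ε_ν ≤ C·ε_α·ε_μ` if `μ` is external, and `ε_ν ≤ C·ε_α` if `μ` is not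
external. -/
theorem excitation_energy_splitting_estimates
    (K N k : ℕ) (hNk : 1 ≤ N ∧ N ≤ k) (hkK : k < K)
    (lam : ℕ → ℝ) (hmono : ∀ i j, 1 ≤ i → i ≤ j → j ≤ K → lam i ≤ lam j)
    (hgap : 0 < lam (k + 1) - lam k) :
    ∃ C : ℝ, 0 ≤ C ∧
      ∀ (n : ℕ), 1 ≤ n → n ≤ N →
      ∀ (A I : Fin n → ℕ),
        (∀ j, 1 ≤ I j ∧ I j ≤ N) → (∀ j, N + 1 ≤ A j ∧ A j ≤ K) →
      ∀ s : Finset (Fin n),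
        (∃ j ∈ s, k + 1 ≤ A j) →
        ((∃ j ∈ sᶜ, k + 1 ≤ A j) →
          ∑ j, (lam (A j) - lam (I j))
            ≤ C * (∑ j ∈ s, (lam (A j) - lam (I j)))
                * (∑ j ∈ sᶜ, (lam (A j) - lam (I j)))) ∧
        ((∀ j ∈ sᶜ, A j ≤ k) →
          ∑ j, (lam (A j) - lam (I j))
            ≤ C * (∑ j ∈ s, (lam (A j) - lam (I j)))) := by
  have hlam : MonotoneOn lam (Set.Icc 1 K) := fun i hi j hj hij => hmono i j hi.1 hij hj.2
  have hk : k ∈ Set.Icc 1 K := ⟨hNk.1.trans hNk.2, hkK.le⟩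
  set ε₀ : ℝ := lam (k + 1) - lam k
  set M : ℝ := N * (lam k - lam 1)
  have hM : 0 ≤ M :=
    mul_nonneg (Nat.cast_nonneg N) (sub_nonneg.2 (hlam ⟨le_rfl, hk.2.trans' hk.1⟩ hk hk.1))
  refine ⟨max (2 / ε₀) (1 + M / ε₀), le_max_of_le_left (by positivity), ?_⟩
  intro n _ hn A I hI hA s hα
  have hterm := excitation_energy_nonneg hlam hI hA
  have ha := gap_le_sum_excitation_energy hlam hNk.2 hI hA hα
  rw [← Finset.sum_add_sum_compl s]
  refine ⟨fun hμ => ?_, fun hμ => ?_⟩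
  · calc _ ≤ 2 / ε₀ * _ * _ :=
          add_le_two_div_mul_mul hgap ha (gap_le_sum_excitation_energy hlam hNk.2 hI hA hμ)
      _ ≤ _ := by
          gcongr
          exacts [Finset.sum_nonneg fun j _ => hterm j, Finset.sum_nonneg fun j _ => hterm j,
            le_max_left _ _]
  · calc _ ≤ (1 + M / ε₀) * _ :=
          add_le_one_add_div_mul hgap ha
            (sum_excitation_energy_le_of_forall_le hlam hk hn hI hA hμ) hM
      _ ≤ _ := by
          gcongr
          exacts [Finset.sum_nonneg fun j _ => hterm j, le_max_right _ _]
end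

section
/- Let V be a real Hilbert space and V_d ⊆ V a subspace. Let a₁, a₂ : V × V → ℝ be bilinear forms and ℓ₁, ℓ₂ : V → ℝ linear functionals. Assume a₂ is coercive on V_d with constant γ > 0, i.e., a₂(v, v) ≥ γ‖v‖² for all v ∈ V_d. Suppose z̃_d ∈ V_d satisfies a₁(u, z̃_d) = ℓ₁(u) for all u ∈ V_d, and z_d ∈ V_d satisfies a₂(u, z_d) = ℓ₂(u) for all u ∈ V_d. If there are constants M₁, M₂ ≥ 0 with |ℓ₂(u) − ℓ₁(u)| ≤ M₁‖u‖ and |a₁(u, z̃_d) − a₂(u, z̃_d)| ≤ M₂‖u‖ for all u ∈ V_d, then γ‖z_d − z̃_d‖ ≤ M₁ + M₂. -/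
/-! Testing both discrete dual equations with `e = z_d - z̃_d` writes `a₂(e, e)` as the sum of
the two data defects at `e`; coercivity bounds it below by `γ‖e‖²` and the defect bounds bound
it above by `(M₁ + M₂)‖e‖`. -/

lemma mul_le_of_mul_sq_le_mul {γ x M : ℝ} (hM : 0 ≤ M) (hx : 0 ≤ x) (h : γ * x ^ 2 ≤ M * x) :
    γ * x ≤ M := by
  rcases hx.eq_or_lt with rfl | hx
  · simpa using hM
  · exact le_of_mul_le_mul_right (by linarith) hx

lemma apply_sub_eq_defect_add_defect {R M : Type*} [CommRing R] [AddCommGroup M] [Module R M]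
    (a₁ a₂ : M →ₗ[R] M →ₗ[R] R) (ℓ₁ ℓ₂ : M →ₗ[R] R) {u z z' : M}
    (h₁ : a₁ u z' = ℓ₁ u) (h₂ : a₂ u z = ℓ₂ u) :
    a₂ u (z - z') = (ℓ₂ u - ℓ₁ u) + (a₁ u z' - a₂ u z') := by
  rw [map_sub, h₂, ← h₁]
  ring

theorem dual_solution_perturbation_general
    {V : Type*} [NormedAddCommGroup V] [InnerProductSpace ℝ V]
    (Vd : Submodule ℝ V)
    (a₁ a₂ : V →ₗ[ℝ] V →ₗ[ℝ] ℝ) (ℓ₁ ℓ₂ : V →ₗ[ℝ] ℝ)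
    (γ : ℝ)
    (hcoer : ∀ v ∈ Vd, γ * ‖v‖ ^ 2 ≤ a₂ v v)
    (ztilde : V) (hztilde : ztilde ∈ Vd)
    (hztilde_sol : ∀ u ∈ Vd, a₁ u ztilde = ℓ₁ u)
    (zd : V) (hzd : zd ∈ Vd)
    (hzd_sol : ∀ u ∈ Vd, a₂ u zd = ℓ₂ u)
    (M₁ M₂ : ℝ) (hM₁ : 0 ≤ M₁) (hM₂ : 0 ≤ M₂)
    (hℓ : ∀ u ∈ Vd, |ℓ₂ u - ℓ₁ u| ≤ M₁ * ‖u‖)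
    (ha : ∀ u ∈ Vd, |a₁ u ztilde - a₂ u ztilde| ≤ M₂ * ‖u‖) :
    γ * ‖zd - ztilde‖ ≤ M₁ + M₂ := by
  set e := zd - ztilde
  have he : e ∈ Vd := Vd.sub_mem hzd hztilde
  refine mul_le_of_mul_sq_le_mul (add_nonneg hM₁ hM₂) (norm_nonneg e) ?_
  calc γ * ‖e‖ ^ 2 ≤ a₂ e e := hcoer e he
    _ = (ℓ₂ e - ℓ₁ e) + (a₁ e ztilde - a₂ e ztilde) :=
      apply_sub_eq_defect_add_defect a₁ a₂ ℓ₁ ℓ₂ (hztilde_sol e he) (hzd_sol e he)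
    _ ≤ |ℓ₂ e - ℓ₁ e| + |a₁ e ztilde - a₂ e ztilde| := add_le_add (le_abs_self _) (le_abs_self _)
    _ ≤ M₁ * ‖e‖ + M₂ * ‖e‖ := add_le_add (hℓ e he) (ha e he)
    _ = (M₁ + M₂) * ‖e‖ := by ring

/-- Perturbation estimate for discrete dual (Lagrange multiplier) solutions: if `z̃_d`
solves the discrete dual problem for `(a₁, ℓ₁)` and `z_d` the one for `(a₂, ℓ₂)`, `a₂` is
coercive on the subspace `V_d` with constant `γ`, and the data differ by `M₁` resp. `M₂`,
then `γ‖z_d − z̃_d‖ ≤ M₁ + M₂`. -/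
theorem dual_solution_perturbation
    {V : Type*} [NormedAddCommGroup V] [InnerProductSpace ℝ V] [CompleteSpace V]
    (Vd : Submodule ℝ V)
    (a₁ a₂ : V →ₗ[ℝ] V →ₗ[ℝ] ℝ) (ℓ₁ ℓ₂ : V →ₗ[ℝ] ℝ)
    (γ : ℝ) (hγ : 0 < γ)
    (hcoer : ∀ v ∈ Vd, γ * ‖v‖ ^ 2 ≤ a₂ v v)
    (ztilde : V) (hztilde : ztilde ∈ Vd)
    (hztilde_sol : ∀ u ∈ Vd, a₁ u ztilde = ℓ₁ u)
    (zd : V) (hzd : zd ∈ Vd)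
    (hzd_sol : ∀ u ∈ Vd, a₂ u zd = ℓ₂ u)
    (M₁ M₂ : ℝ) (hM₁ : 0 ≤ M₁) (hM₂ : 0 ≤ M₂)
    (hℓ : ∀ u ∈ Vd, |ℓ₂ u - ℓ₁ u| ≤ M₁ * ‖u‖)
    (ha : ∀ u ∈ Vd, |a₁ u ztilde - a₂ u ztilde| ≤ M₂ * ‖u‖) :
    γ * ‖zd - ztilde‖ ≤ M₁ + M₂ :=
  dual_solution_perturbation_general Vd a₁ a₂ ℓ₁ ℓ₂ γ hcoer ztilde hztilde hztilde_sol zd hzd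
    hzd_sol M₁ M₂ hM₁ hM₂ hℓ ha
end

section
/- Let V be a real Hilbert space, let E : V → ℝ and f : V → V be three times continuously differentiable, and let V_d ⊆ V be a subspace. Suppose (t*, z*) ∈ V × V satisfies f(t*) = 0 and E'(t*)(u) = ⟨f'(t*)(u), z*⟩ for all u ∈ V, and (t_d, z_d) ∈ V_d × V_d satisfies ⟨f(t_d), v⟩ = 0 and E'(t_d)(v) = ⟨f'(t_d)(v), z_d⟩ for all v ∈ V_d. Define the primal residual ρ(t_d)(u) = −⟨f(t_d), u⟩ and the dual residual ρ*(t_d, z_d)(u) = E'(t_d)(u) − ⟨f'(t_d)(u), z_d⟩, and set e = t* − t_d, e* = z* − z_d. Then for all v_d, w_d ∈ V_d: 2(E(t*) − E(t_d)) = R + ρ(t_d)(z* − v_d) + ρ*(t_d, z_d)(t* − w_d), where R = ∫₀¹ [ E'''(t_d + s·e)(e, e, e) − ⟨f'''(t_d + s·e)(e, e, e), z_d + s·e*⟩ − 3⟨f''(t_d + s·e)(e, e), e*⟩ ] · s(s − 1) ds, with E''', f'', f''' denoting the second and third Fréchet derivatives (multilinear maps) of E and f. -/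
/-!
Restrict the Lagrangian `L(t, z) = E t - ⟪f t, z⟫` to the segment from `(t_d, z_d)` to
`(t*, z*)`: `g s = L(t_d + s • e, z_d + s • e*)`. Then `g 1 = E t*` and `g 0 = E t_d` since
`f t* = 0` and `f t_d ⟂ V_d`, `g' 1 = 0` by stationarity of `(t*, z*)`, and by Galerkin
orthogonality `g' 0` equals the sum of the two residuals at `z* - v_d` and `t* - w_d` for any
`v_d, w_d ∈ V_d`. The trapezoid rule with Peano-kernel remainder,
`∫₀¹ g''' s * (s * (s - 1)) = 2 (g 1 - g 0) - g' 1 - g' 0`, gives the identity.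
-/

open RealInnerProductSpace

theorem hasDerivAt_iteratedFDeriv_apply_const_line {𝕜 E F : Type*} [NontriviallyNormedField 𝕜]
    [NormedAddCommGroup E] [NormedSpace 𝕜 E] [NormedAddCommGroup F] [NormedSpace 𝕜 F]
    {g : E → F} {k : WithTop ℕ∞} {n : ℕ} (hg : ContDiff 𝕜 k g) (hn : (n : WithTop ℕ∞) < k)
    (x v : E) (s : 𝕜) :
    HasDerivAt (fun s : 𝕜 => iteratedFDeriv 𝕜 n g (x + s • v) fun _ => v)
      (iteratedFDeriv 𝕜 (n + 1) g (x + s • v) fun _ => v) s := by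
  have hline : HasDerivAt (fun s : 𝕜 => x + s • v) v s := by
    simpa using ((hasDerivAt_id s).smul_const v).const_add x
  have hD := (hg.differentiable_iteratedFDeriv hn (x + s • v)).hasFDerivAt.comp_hasDerivAt s hline
  rw [iteratedFDeriv_succ_apply_left]
  exact (ContinuousMultilinearMap.apply 𝕜 _ F fun _ => v).hasFDerivAt.comp_hasDerivAt s hD

theorem integral_mul_sub_one_eq_trapezoid_error {g g₁ g₂ g₃ : ℝ → ℝ}
    (hg : ∀ s ∈ Set.Icc (0 : ℝ) 1, HasDerivAt g (g₁ s) s)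
    (hg₁ : ∀ s ∈ Set.Icc (0 : ℝ) 1, HasDerivAt g₁ (g₂ s) s)
    (hg₂ : ∀ s ∈ Set.Icc (0 : ℝ) 1, HasDerivAt g₂ (g₃ s) s)
    (hg₃ : IntervalIntegrable g₃ MeasureTheory.volume 0 1) :
    ∫ s in (0 : ℝ)..1, g₃ s * (s * (s - 1)) = 2 * (g 1 - g 0) - g₁ 1 - g₁ 0 := by
  have hprim : ∀ s ∈ Set.uIcc (0 : ℝ) 1,
      HasDerivAt (fun s => g₂ s * (s * (s - 1)) - g₁ s * (2 * s - 1) + 2 * g s)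
        (g₃ s * (s * (s - 1))) s := by
    intro s hs
    rw [Set.uIcc_of_le zero_le_one] at hs
    have hq : HasDerivAt (fun s : ℝ => s * (s - 1)) (2 * s - 1) s :=
      ((hasDerivAt_id' s).mul ((hasDerivAt_id' s).sub_const 1)).congr_deriv (by ring)
    have hl : HasDerivAt (fun s : ℝ => 2 * s - 1) 2 s := by
      simpa using ((hasDerivAt_id s).const_mul (2 : ℝ)).sub_const 1
    exact ((((hg₂ s hs).mul hq).sub ((hg₁ s hs).mul hl)).add ((hg s hs).const_mul 2)).congr_deriv
      (by ring)
  rw [intervalIntegral.integral_eq_sub_of_hasDerivAt hprim (hg₃.mul_continuousOn (by fun_prop))]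
  ring

section Lagrangian

variable {V : Type*} [NormedAddCommGroup V] [InnerProductSpace ℝ V] {E : V → ℝ} {f : V → V}

/-- The `k`-th derivative of `s ↦ E (t + s • e) - ⟪f (t + s • e), z + s • e'⟫`; for `k = 0` the
last term vanishes despite the truncated `k - 1`. -/
noncomputable def lagrangianLineDeriv (E : V → ℝ) (f : V → V) (t z e e' : V) (k : ℕ) (s : ℝ) :
    ℝ :=
  iteratedFDeriv ℝ k E (t + s • e) (fun _ => e)
    - ⟪iteratedFDeriv ℝ k f (t + s • e) (fun _ => e), z + s • e'⟫
    - k * ⟪iteratedFDeriv ℝ (k - 1) f (t + s • e) (fun _ => e), e'⟫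

variable (E f) in
@[simp]
theorem lagrangianLineDeriv_zero (t z e e' : V) (s : ℝ) :
    lagrangianLineDeriv E f t z e e' 0 s = E (t + s • e) - ⟪f (t + s • e), z + s • e'⟫ := by
  simp [lagrangianLineDeriv]

variable (E f) in
@[simp]
theorem lagrangianLineDeriv_one (t z e e' : V) (s : ℝ) :
    lagrangianLineDeriv E f t z e e' 1 s =
      fderiv ℝ E (t + s • e) e - ⟪fderiv ℝ f (t + s • e) e, z + s • e'⟫ - ⟪f (t + s • e), e'⟫ := by
  simp [lagrangianLineDeriv, iteratedFDeriv_one_apply]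

theorem hasDerivAt_lagrangianLineDeriv {n : WithTop ℕ∞} {k : ℕ} (hE : ContDiff ℝ n E)
    (hf : ContDiff ℝ n f) (hk : (k : WithTop ℕ∞) < n) (t z e e' : V) (s : ℝ) :
    HasDerivAt (lagrangianLineDeriv E f t z e e' k) (lagrangianLineDeriv E f t z e e' (k + 1) s)
      s := by
  have hz : HasDerivAt (fun s : ℝ => z + s • e') e' s := by
    simpa using ((hasDerivAt_id s).smul_const e').const_add z
  have hdE := hasDerivAt_iteratedFDeriv_apply_const_line hE hk t e s
  have hdf := (hasDerivAt_iteratedFDeriv_apply_const_line hf hk t e s).inner ℝ hz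
  have hdlast : HasDerivAt
      (fun s : ℝ => (k : ℝ) * ⟪iteratedFDeriv ℝ (k - 1) f (t + s • e) (fun _ => e), e'⟫)
      ((k : ℝ) * ⟪iteratedFDeriv ℝ k f (t + s • e) (fun _ => e), e'⟫) s := by
    cases k with
    | zero => simpa using hasDerivAt_const s (0 : ℝ)
    | succ m =>
      have hm : (m : WithTop ℕ∞) < n := lt_of_le_of_lt (by exact_mod_cast m.le_succ) hk
      exact ((hasDerivAt_iteratedFDeriv_apply_const_line hf hm t e s).inner ℝ
        (hasDerivAt_const s e')).const_mul _ |>.congr_deriv (by simp)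
  exact ((hdE.sub hdf).sub hdlast).congr_deriv (by simp [lagrangianLineDeriv]; ring)

theorem continuous_lagrangianLineDeriv {n : WithTop ℕ∞} {k : ℕ} (hE : ContDiff ℝ n E)
    (hf : ContDiff ℝ n f) (hk : (k : WithTop ℕ∞) ≤ n) (t z e e' : V) :
    Continuous (lagrangianLineDeriv E f t z e e' k) := by
  have hE' := hE.continuous_iteratedFDeriv hk
  have hf' := hf.continuous_iteratedFDeriv hk
  have hf'' := hf.continuous_iteratedFDeriv (le_trans (by exact_mod_cast k.sub_le 1) hk)
  unfold lagrangianLineDeriv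
  fun_prop

end Lagrangian

theorem bangerth_rannacher_error_representation_general
    {V : Type*} [NormedAddCommGroup V] [InnerProductSpace ℝ V]
    (E : V → ℝ) (f : V → V) (hE : ContDiff ℝ 3 E) (hf : ContDiff ℝ 3 f)
    (Vd : Submodule ℝ V)
    (tstar zstar td zd : V)
    (hprimal : f tstar = 0)
    (hdual : ∀ u : V, fderiv ℝ E tstar u = ⟪fderiv ℝ f tstar u, zstar⟫)
    (htd : td ∈ Vd) (hzd : zd ∈ Vd)
    (hprimal_d : ∀ v ∈ Vd, ⟪f td, v⟫ = 0)
    (hdual_d : ∀ v ∈ Vd, fderiv ℝ E td v = ⟪fderiv ℝ f td v, zd⟫) :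
    ∀ vd ∈ Vd, ∀ wd ∈ Vd,
      2 * (E tstar - E td) =
        (∫ s in (0:ℝ)..1,
          (iteratedFDeriv ℝ 3 E (td + s • (tstar - td))
              ![tstar - td, tstar - td, tstar - td]
            - ⟪iteratedFDeriv ℝ 3 f (td + s • (tstar - td))
                ![tstar - td, tstar - td, tstar - td], zd + s • (zstar - zd)⟫
            - 3 * ⟪iteratedFDeriv ℝ 2 f (td + s • (tstar - td))
                ![tstar - td, tstar - td], zstar - zd⟫) * (s * (s - 1)))
        + (-⟪f td, zstar - vd⟫)
        + (fderiv ℝ E td (tstar - wd) - ⟪fderiv ℝ f td (tstar - wd), zd⟫) := by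
  intro vd hvd wd hwd
  have hD : ∀ k < 3, ∀ s, HasDerivAt (lagrangianLineDeriv E f td zd (tstar - td) (zstar - zd) k)
      (lagrangianLineDeriv E f td zd (tstar - td) (zstar - zd) (k + 1) s) s := fun k hk =>
    hasDerivAt_lagrangianLineDeriv hE hf (by exact_mod_cast hk) _ _ _ _
  have htrap := integral_mul_sub_one_eq_trapezoid_error (fun s _ => hD 0 (by norm_num) s)
    (fun s _ => hD 1 (by norm_num) s) (fun s _ => hD 2 (by norm_num) s)
    ((continuous_lagrangianLineDeriv hE hf le_rfl td zd _ _).intervalIntegrable 0 1)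
  have hintegrand : ∀ s : ℝ, lagrangianLineDeriv E f td zd (tstar - td) (zstar - zd) 3 s =
      iteratedFDeriv ℝ 3 E (td + s • (tstar - td)) ![tstar - td, tstar - td, tstar - td]
        - ⟪iteratedFDeriv ℝ 3 f (td + s • (tstar - td)) ![tstar - td, tstar - td, tstar - td],
            zd + s • (zstar - zd)⟫
        - 3 * ⟪iteratedFDeriv ℝ 2 f (td + s • (tstar - td)) ![tstar - td, tstar - td],
            zstar - zd⟫ := fun s => by
    simp only [lagrangianLineDeriv, Matrix.vec_single_eq_const, Matrix.vecCons_const,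
      Nat.cast_ofNat]
  simp only [← hintegrand, htrap]
  have hGalerkin :
      fderiv ℝ E td (td - wd) - ⟪fderiv ℝ f td (td - wd), zd⟫ - ⟪f td, zd - vd⟫ = 0 := by
    rw [hdual_d _ (Vd.sub_mem htd hwd), hprimal_d _ (Vd.sub_mem hzd hvd)]; ring
  simp only [Nat.reduceAdd, lagrangianLineDeriv_zero, lagrangianLineDeriv_one, zero_smul, one_smul,
    add_zero, add_sub_cancel, hprimal, hdual, inner_zero_left, hprimal_d zd hzd]
  simp only [map_sub, inner_sub_left, inner_sub_right] at hGalerkin ⊢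
  linarith

/-- Bangerth–Rannacher error representation for nonlinear Galerkin schemes:
`2(E(t*) − E(t_d)) = R + ρ(t_d)(z* − v_d) + ρ*(t_d, z_d)(t* − w_d)` for all
`v_d, w_d ∈ V_d`, with the cubic remainder `R` expressed as an integral of third
derivatives along the segment from `t_d` to `t*`. -/
theorem bangerth_rannacher_error_representation
    {V : Type*} [NormedAddCommGroup V] [InnerProductSpace ℝ V] [CompleteSpace V]
    (E : V → ℝ) (f : V → V) (hE : ContDiff ℝ 3 E) (hf : ContDiff ℝ 3 f)
    (Vd : Submodule ℝ V)
    (tstar zstar td zd : V)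
    (hprimal : f tstar = 0)
    (hdual : ∀ u : V, fderiv ℝ E tstar u = ⟪fderiv ℝ f tstar u, zstar⟫)
    (htd : td ∈ Vd) (hzd : zd ∈ Vd)
    (hprimal_d : ∀ v ∈ Vd, ⟪f td, v⟫ = 0)
    (hdual_d : ∀ v ∈ Vd, fderiv ℝ E td v = ⟪fderiv ℝ f td v, zd⟫) :
    ∀ vd ∈ Vd, ∀ wd ∈ Vd,
      2 * (E tstar - E td) =
        (∫ s in (0:ℝ)..1,
          (iteratedFDeriv ℝ 3 E (td + s • (tstar - td))
              ![tstar - td, tstar - td, tstar - td]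
            - ⟪iteratedFDeriv ℝ 3 f (td + s • (tstar - td))
                ![tstar - td, tstar - td, tstar - td], zd + s • (zstar - zd)⟫
            - 3 * ⟪iteratedFDeriv ℝ 2 f (td + s • (tstar - td))
                ![tstar - td, tstar - td], zstar - zd⟫) * (s * (s - 1)))
        + (-⟪f td, zstar - vd⟫)
        + (fderiv ℝ E td (tstar - wd) - ⟪fderiv ℝ f td (tstar - wd), zd⟫) :=
  bangerth_rannacher_error_representation_general E f hE hf Vd tstar zstar td zd hprimal hdual htd
    hzd hprimal_d hdual_d
end
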